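/- If v and w both belong to a δ-clean cluster C' in a clustering, then w is 3δ-good with respect to N^+(v). -/

import Mathlib

attribute [local instance] Classical.propDecidable

/-- `N⁺(v)`: the vertex `v` together with all vertices joined to it by a positive edge. -/
def Nplus {V : Type*} [Fintype V] [DecidableEq V] (pos : V → V → Bool) (v : V) : Finset V :=
  insert v (Finset.univ.filter (fun u => pos u v = true))

/-- `v` is `δ`-good with respect to `C`. -/
def IsGood {V : Type*} [Fintype V] [DecidableEq V]
    (pos : V → V → Bool) (δ : ℝ) (v : V) (C : Finset V) : Prop :=
  (1 - δ) * (C.card : ℝ) ≤ ((Nplus pos v ∩ C).card : ℝ) ∧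
  ((Nplus pos v ∩ Cᶜ).card : ℝ) ≤ δ * (C.card : ℝ)

/-- `C` is `δ`-clean if every vertex of `C` is `δ`-good with respect to `C`. -/
def IsClean {V : Type*} [Fintype V] [DecidableEq V]
    (pos : V → V → Bool) (δ : ℝ) (C : Finset V) : Prop :=
  ∀ v ∈ C, IsGood pos δ v C

/-!
Write `N = N⁺(v)`, `A = N⁺(w)` and `c = |C'|`. Goodness of `v` gives `(1 - δ) c ≤ |N| ≤ (1 + δ) c`
and `|C' \ N| ≤ δ c`. Inclusion–exclusion inside `C'` gives `|A ∩ N| ≥ |A ∩ C'| + |N ∩ C'| - c ≥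
(1 - 2δ) c`, and `A \ N ⊆ (A \ C') ∪ (C' \ N)` gives `|A \ N| ≤ 2δ c`. Against the bounds on `|N|`
these are the `3δ`-goodness inequalities as soon as `δ ≤ 1/3`.
-/

open Finset

namespace Finset

variable {α : Type*} [DecidableEq α]

theorem card_inter_add_card_inter_le (s t u : Finset α) :
    #(s ∩ u) + #(t ∩ u) ≤ #u + #(s ∩ t) :=
  calc #(s ∩ u) + #(t ∩ u) = #(s ∩ u ∪ t ∩ u) + #(s ∩ u ∩ (t ∩ u)) :=
        (card_union_add_card_inter _ _).symm
    _ ≤ #u + #(s ∩ t) :=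
        add_le_add (card_le_card (union_subset inter_subset_right inter_subset_right))
          (card_le_card fun x hx => by simp only [mem_inter] at hx ⊢; tauto)

theorem card_sdiff_le_card_sdiff_add_card_sdiff (s t u : Finset α) :
    #(s \ t) ≤ #(s \ u) + #(u \ t) :=
  (card_le_card (sdiff_triangle s u t)).trans (card_union_le _ _)

end Finset

namespace IsGood

variable {V : Type*} [Fintype V] [DecidableEq V] {pos : V → V → Bool} {δ : ℝ} {v w : V}
  {C : Finset V}

theorem card_pos (h : IsGood pos δ v C) : 0 < #C := by
  rw [Finset.card_pos, nonempty_iff_ne_empty]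
  rintro rfl
  have hN : (0 : ℝ) < #(Nplus pos v) := mod_cast Finset.card_pos.mpr ⟨v, mem_insert_self _ _⟩
  have h₂ := h.2
  simp only [compl_empty, inter_univ, card_empty, CharP.cast_eq_zero, mul_zero] at h₂
  linarith

theorem nonneg (h : IsGood pos δ v C) : 0 ≤ δ := by
  have hC : (0 : ℝ) < #C := mod_cast h.card_pos
  have : (#(Nplus pos v ∩ C) : ℝ) ≤ #C := mod_cast card_le_card inter_subset_right
  nlinarith [h.1]

theorem le_card_Nplus (h : IsGood pos δ v C) : (1 - δ) * #C ≤ (#(Nplus pos v) : ℝ) :=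
  h.1.trans (mod_cast card_le_card inter_subset_left)

theorem card_Nplus_le (h : IsGood pos δ v C) : (#(Nplus pos v) : ℝ) ≤ (1 + δ) * #C := by
  have hsplit : (#(Nplus pos v ∩ C) : ℝ) + #(Nplus pos v ∩ Cᶜ) = #(Nplus pos v) := by
    rw [← sdiff_eq_inter_compl]
    exact_mod_cast card_inter_add_card_sdiff _ _
  have : (#(Nplus pos v ∩ C) : ℝ) ≤ #C := mod_cast card_le_card inter_subset_right
  linarith [h.2]

theorem card_sdiff_Nplus_le (h : IsGood pos δ v C) : (#(C \ Nplus pos v) : ℝ) ≤ δ * #C := by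
  have hsplit : (#(C \ Nplus pos v) : ℝ) + #(Nplus pos v ∩ C) = #C := by
    rw [inter_comm]
    exact_mod_cast card_sdiff_add_card_inter _ _
  linarith [h.1]

theorem le_card_Nplus_inter_Nplus (hv : IsGood pos δ v C) (hw : IsGood pos δ w C) :
    (1 - 2 * δ) * #C ≤ (#(Nplus pos w ∩ Nplus pos v) : ℝ) := by
  have : (#(Nplus pos w ∩ C) : ℝ) + #(Nplus pos v ∩ C) ≤ #C + #(Nplus pos w ∩ Nplus pos v) :=
    mod_cast card_inter_add_card_inter_le _ _ _
  linarith [hv.1, hw.1]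

theorem card_Nplus_inter_compl_Nplus_le (hv : IsGood pos δ v C) (hw : IsGood pos δ w C) :
    (#(Nplus pos w ∩ (Nplus pos v)ᶜ) : ℝ) ≤ 2 * δ * #C := by
  have htri : (#(Nplus pos w \ Nplus pos v) : ℝ) ≤ #(Nplus pos w \ C) + #(C \ Nplus pos v) :=
    mod_cast card_sdiff_le_card_sdiff_add_card_sdiff _ _ _
  rw [sdiff_eq_inter_compl, sdiff_eq_inter_compl (Nplus pos w)] at htri
  linarith [hw.2, hv.card_sdiff_Nplus_le]

theorem isGood_Nplus (hv : IsGood pos δ v C) (hw : IsGood pos δ w C) (hδ : δ ≤ 1 / 3) :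
    IsGood pos (3 * δ) w (Nplus pos v) := by
  have hδ₀ := hv.nonneg
  have hC : (0 : ℝ) ≤ #C := Nat.cast_nonneg _
  constructor
  · calc (1 - 3 * δ) * #(Nplus pos v) ≤ (1 - 3 * δ) * ((1 + δ) * #C) := by
          gcongr
          · linarith
          · exact hv.card_Nplus_le
      _ ≤ (1 - 2 * δ) * #C := by nlinarith [mul_nonneg (mul_nonneg hδ₀ hδ₀) hC]
      _ ≤ _ := hv.le_card_Nplus_inter_Nplus hw
  · calc _ ≤ 2 * δ * #C := hv.card_Nplus_inter_compl_Nplus_le hw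
      _ ≤ 3 * δ * ((1 - δ) * #C) := by
          nlinarith [mul_nonneg (mul_nonneg hδ₀ (by linarith : (0 : ℝ) ≤ 1 - 3 * δ)) hC]
      _ ≤ 3 * δ * #(Nplus pos v) := by
          gcongr
          exact hv.le_card_Nplus

end IsGood

theorem good_wrt_Nplus_general {V : Type*} [Fintype V] [DecidableEq V]
    (pos : V → V → Bool)
    (δ : ℝ) (hδ : δ ≤ 1/4)
    (C' : Finset V) (hclean : IsClean pos δ C')
    (v w : V) (hv : v ∈ C') (hw : w ∈ C') :
    IsGood pos (3 * δ) w (Nplus pos v) :=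
  (hclean v hv).isGood_Nplus (hclean w hw) (by linarith)

/-- If `v` and `w` both belong to a `δ`-clean cluster `C'`, then `w` is `3δ`-good
with respect to `N⁺(v)`. -/
theorem good_wrt_Nplus {V : Type*} [Fintype V] [DecidableEq V]
    (pos : V → V → Bool) (hsym : ∀ u v, pos u v = pos v u)
    (δ : ℝ) (hδ : δ ≤ 1/4)
    (C' : Finset V) (hclean : IsClean pos δ C')
    (v w : V) (hv : v ∈ C') (hw : w ∈ C') :
    IsGood pos (3 * δ) w (Nplus pos v) :=
  good_wrt_Nplus_general pos δ hδ C' hclean v w hv hw
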